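/- Let φ(z) = −4z/(z² + 2), extended to ℙ¹(ℚ) = ℚ ∪ {∞} (the denominator has no rational roots; φ(∞) = 0 since the numerator has smaller degree). Then the set of rational preperiodic points of φ is exactly {0, ∞}: 0 is a fixed point, φ(∞) = 0, and every other α ∈ ℚ has infinite forward orbit. -/

import Mathlib

/-!
The 2-adic valuation strictly increases along every orbit of `φ` in `ℚˣ`: writing
`v = v₂(x)`, one has `v₂(x² + 2) = min (2v) 1` (the two valuations differ by parity), hence
`v₂(φ x) = 2 + v - min (2v) 1 > v`. So the orbit of a nonzero rational never repeats, while
`∞ ↦ 0 ↦ 0`.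
-/

/-- The map `φ(z) = −4z/(z² + 2)` on `ℙ¹(ℚ)`, with `φ(∞) = 0`. -/
def phi12 : Option ℚ → Option ℚ
  | none => some 0
  | some x =>
      if x ^ 2 + 2 = 0 then none else some (-4 * x / (x ^ 2 + 2))

/-- A point is preperiodic for a self-map `f` if two distinct iterates of `f`
agree on it, i.e. its forward orbit is finite. -/
def IsPreperiodicPt {X : Type*} (f : X → X) (α : X) : Prop :=
  ∃ i j : ℕ, i < j ∧ f^[i] α = f^[j] α

lemma not_isPreperiodicPt_of_injective {X : Type*} {f : X → X} {α : X}
    (h : Function.Injective fun n : ℕ => f^[n] α) : ¬ IsPreperiodicPt f α := by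
  rintro ⟨i, j, hij, heq⟩
  exact hij.ne (h heq)

def phi12Rat (x : ℚ) : ℚ := -4 * x / (x ^ 2 + 2)

lemma phi12_some (x : ℚ) : phi12 (some x) = some (phi12Rat x) := by
  have : x ^ 2 + 2 ≠ 0 := by positivity
  simp [phi12, phi12Rat, this]

lemma iterate_phi12_some (n : ℕ) (x : ℚ) : phi12^[n] (some x) = some (phi12Rat^[n] x) :=
  ((Function.Semiconj.iterate_right (fun y => (phi12_some y).symm) n) x).symm

lemma phi12Rat_ne_zero {x : ℚ} (hx : x ≠ 0) : phi12Rat x ≠ 0 := by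
  have : x ^ 2 + 2 ≠ 0 := by positivity
  simp [phi12Rat, hx, this]

lemma padicValRat_sq_add_self {p : ℕ} [Fact p.Prime] {x : ℚ} (hx : x ≠ 0) :
    padicValRat p (x ^ 2 + p) = min (2 * padicValRat p x) 1 := by
  have hp : (p : ℚ) ≠ 0 := by exact_mod_cast (Fact.out : p.Prime).ne_zero
  have hvp : padicValRat p p = 1 := padicValRat.self (Fact.out : p.Prime).one_lt
  have hvsq : padicValRat p (x ^ 2) = 2 * padicValRat p x := by
    rw [padicValRat.pow x]; push_cast; rfl
  have hsum : x ^ 2 + p ≠ 0 := by positivity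
  rw [padicValRat.add_eq_min hsum (pow_ne_zero 2 hx) hp (by omega), hvsq, hvp]

lemma padicValRat_two_phi12Rat {x : ℚ} (hx : x ≠ 0) :
    padicValRat 2 (phi12Rat x) = 2 + padicValRat 2 x - min (2 * padicValRat 2 x) 1 := by
  have hv4 : padicValRat 2 (-4 : ℚ) = 2 := by
    rw [padicValRat.neg, show (4 : ℚ) = 2 ^ 2 by norm_num, padicValRat.pow 2,
      ← Nat.cast_ofNat (R := ℚ) (n := 2), padicValRat.self one_lt_two]
    rfl
  have hsum : x ^ 2 + 2 ≠ 0 := by positivity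
  have hden := padicValRat_sq_add_self (p := 2) hx
  rw [Nat.cast_ofNat] at hden
  rw [phi12Rat, padicValRat.div (mul_ne_zero (by norm_num) hx) hsum,
    padicValRat.mul (by norm_num) hx, hv4, hden]

lemma padicValRat_two_lt_phi12Rat {x : ℚ} (hx : x ≠ 0) :
    padicValRat 2 x < padicValRat 2 (phi12Rat x) := by
  rw [padicValRat_two_phi12Rat hx]
  omega

lemma injective_iterate_phi12_some {x : ℚ} (hx : x ≠ 0) :
    Function.Injective fun n : ℕ => phi12^[n] (some x) := by
  have hne : Set.MapsTo phi12Rat {y | y ≠ 0} {y | y ≠ 0} := fun _ => phi12Rat_ne_zero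
  have hmono : StrictMono fun n : ℕ => padicValRat 2 (phi12Rat^[n] x) :=
    strictMono_nat_of_lt_succ fun n => by
      rw [Function.iterate_succ_apply']
      exact padicValRat_two_lt_phi12Rat (hne.iterate n hx)
  intro m n hmn
  simp only [iterate_phi12_some, Option.some_inj] at hmn
  exact hmono.injective (congrArg (padicValRat 2) hmn)

/-- The set of rational preperiodic points of `φ(z) = −4z/(z² + 2)` is
exactly `{0, ∞}`: `0` is fixed, `φ(∞) = 0`, and every other point has
infinite forward orbit. -/
theorem phi12_preperiodic_points :
    {α : Option ℚ | IsPreperiodicPt phi12 α} =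
        ({some 0, none} : Set (Option ℚ)) ∧
      phi12 (some 0) = some 0 ∧ phi12 none = some 0 ∧
      ∀ α : Option ℚ, α ≠ some 0 → α ≠ none →
        (Set.range fun n : ℕ => phi12^[n] α).Infinite := by
  have hfix : phi12 (some 0) = some 0 := by simp [phi12]
  have hinj : ∀ α : Option ℚ, α ≠ some 0 → α ≠ none →
      Function.Injective fun n : ℕ => phi12^[n] α := by
    rintro (_ | x) h0 hnone
    · exact absurd rfl hnone
    · exact injective_iterate_phi12_some fun hx => h0 (by rw [hx])
  refine ⟨?_, hfix, rfl, fun α h0 hnone => Set.infinite_range_of_injective (hinj α h0 hnone)⟩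
  ext α
  simp only [Set.mem_ofPred_eq, Set.mem_insert_iff, Set.mem_singleton_iff]
  constructor
  · intro hpre
    by_contra! h
    exact not_isPreperiodicPt_of_injective (hinj α h.1 h.2) hpre
  · rintro (rfl | rfl)
    · exact ⟨0, 1, one_pos, hfix.symm⟩
    · exact ⟨1, 2, one_lt_two, hfix.symm⟩
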